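/- (Survival of smallness at one step) Let g, h : ℕ → ℕ with g(n) ≤ h(n) for all n, let T be a tree that is h-bushy above the empty string, let B be a set of strings, and let ρ ∈ T be a non-leaf of T with |ρ| = n. If B is g-small above ρ, then there are at least h(n) − g(n) distinct immediate extensions τ of ρ with τ ∈ T such that B is g-small above τ. -/

import Mathlib

/-- A tree is a set of strings (finite sequences of naturals) closed under prefixes. -/
def IsTree (T : Set (List ℕ)) : Prop :=
  ∀ σ ∈ T, ∀ τ : List ℕ, τ <+: σ → τ ∈ T

/-- A leaf of `T` is an element of `T` with no immediate extension in `T`. -/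
def IsLeaf (T : Set (List ℕ)) (τ : List ℕ) : Prop :=
  τ ∈ T ∧ ∀ a : ℕ, τ ++ [a] ∉ T

/-- A tree `T` is `h`-bushy above `σ`: `σ ∈ T`, every element of `T` is comparable
with `σ`, and every non-leaf `τ ∈ T` extending `σ` has at least `h |τ|` immediate
extensions in `T`. -/
def BushyAbove (h : ℕ → ℕ) (σ : List ℕ) (T : Set (List ℕ)) : Prop :=
  IsTree T ∧ σ ∈ T ∧
  (∀ τ ∈ T, τ <+: σ ∨ σ <+: τ) ∧
  (∀ τ ∈ T, σ <+: τ → ¬ IsLeaf T τ → (h τ.length : ℕ∞) ≤ {a : ℕ | τ ++ [a] ∈ T}.encard)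

/-- `B` is `h`-big above `σ` if there is a finite tree, `h`-bushy above `σ`,
all of whose leaves belong to `B`. -/
def BigAbove (h : ℕ → ℕ) (σ : List ℕ) (B : Set (List ℕ)) : Prop :=
  ∃ T : Set (List ℕ), T.Finite ∧ BushyAbove h σ T ∧ ∀ τ, IsLeaf T τ → τ ∈ B

/-- `B` is `h`-small above `σ` if it is not `h`-big above `σ`. -/
def SmallAbove (h : ℕ → ℕ) (σ : List ℕ) (B : Set (List ℕ)) : Prop :=
  ¬ BigAbove h σ B

/-!
If `B` were `g`-big above more than `g |ρ|` immediate extensions of `ρ`, then grafting the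
witnessing finite bushy trees above `g |ρ| + 1` of those extensions onto the prefixes of `ρ`
would give a finite tree, `g`-bushy above `ρ`, with all leaves in `B`, contradicting the
`g`-smallness of `B` above `ρ`. So at most `g |ρ|` of the at least `h |ρ|` extensions of `ρ`
in `T` carry a `g`-big `B`, and the rest carry a `g`-small one.
-/

lemma List.eq_of_append_singleton_prefix {α : Type*} {l l' : List α} {a b : α}
    (ha : l ++ [a] <+: l') (hb : l ++ [b] <+: l') : a = b := by
  simpa using List.prefix_of_prefix_length_le ha hb (by simp)

lemma BushyAbove.prefix_or_append_prefix {g : ℕ → ℕ} {ρ τ : List ℕ} {a : ℕ} {S : Set (List ℕ)}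
    (hS : BushyAbove g (ρ ++ [a]) S) (hτ : τ ∈ S) : τ <+: ρ ∨ ρ ++ [a] <+: τ := by
  rcases hS.2.2.1 τ hτ with h | h
  · rcases List.prefix_concat_iff.1 h with rfl | h
    · exact Or.inr (List.prefix_refl _)
    · exact Or.inl h
  · exact Or.inr h

def graft (ρ : List ℕ) (F : Set ℕ) (S : ℕ → Set (List ℕ)) : Set (List ℕ) :=
  {τ | τ <+: ρ} ∪ ⋃ a ∈ F, S a

namespace graft

variable {g : ℕ → ℕ} {ρ τ : List ℕ} {a : ℕ} {F : Set ℕ} {S : ℕ → Set (List ℕ)}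

lemma subset_of_mem (ha : a ∈ F) : S a ⊆ graft ρ F S :=
  fun _ hτ => Or.inr (Set.mem_biUnion ha hτ)

lemma finite (hF : F.Finite) (hS : ∀ a ∈ F, (S a).Finite) : (graft ρ F S).Finite := by
  refine Set.Finite.union ?_ (hF.biUnion hS)
  simpa only [List.mem_inits] using ρ.inits.finite_toSet

variable (hS : ∀ a ∈ F, BushyAbove g (ρ ++ [a]) (S a))
include hS

lemma isTree : IsTree (graft ρ F S) := by
  rintro σ (hσ | hσ) τ hτσ
  · exact Or.inl (hτσ.trans hσ)
  · obtain ⟨a, ha, hσa⟩ := Set.mem_iUnion₂.1 hσ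
    exact subset_of_mem ha ((hS a ha).1 σ hσa τ hτσ)

lemma prefix_or_exists_append_prefix (hτ : τ ∈ graft ρ F S) :
    τ <+: ρ ∨ ∃ a ∈ F, τ ∈ S a ∧ ρ ++ [a] <+: τ := by
  rcases hτ with hτ | hτ
  · exact Or.inl hτ
  obtain ⟨a, ha, hτa⟩ := Set.mem_iUnion₂.1 hτ
  exact ((hS a ha).prefix_or_append_prefix hτa).imp_right fun h => ⟨a, ha, hτa, h⟩

lemma exists_append_prefix (hτ : τ ∈ graft ρ F S) (hlen : ρ.length < τ.length) :
    ∃ a ∈ F, τ ∈ S a ∧ ρ ++ [a] <+: τ :=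
  (prefix_or_exists_append_prefix hS hτ).resolve_left fun h => absurd h.length_le (by omega)

lemma children_eq (ha : a ∈ F) (hρτ : ρ ++ [a] <+: τ) :
    {c | τ ++ [c] ∈ graft ρ F S} = {c | τ ++ [c] ∈ S a} := by
  refine Set.Subset.antisymm (fun c hc => ?_) (fun c hc => subset_of_mem ha hc)
  have hlen : ρ.length < (τ ++ [c]).length := by
    have := hρτ.length_le
    simp only [List.length_append, List.length_singleton] at this ⊢
    omega
  obtain ⟨b, -, hcb, hρb⟩ := exists_append_prefix hS hc hlen
  obtain rfl : a = b :=
    List.eq_of_append_singleton_prefix (hρτ.trans (τ.prefix_append [c])) hρb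
  exact hcb

lemma isLeaf_iff (ha : a ∈ F) (hτ : τ ∈ S a) (hρτ : ρ ++ [a] <+: τ) :
    IsLeaf (graft ρ F S) τ ↔ IsLeaf (S a) τ := by
  have hchildren := Set.ext_iff.1 (children_eq hS ha hρτ)
  simp only [Set.mem_ofPred_eq] at hchildren
  simp only [IsLeaf, hchildren, hτ, subset_of_mem ha hτ, true_and]

lemma not_isLeaf_of_prefix (hF : F.Nonempty) (hτ : τ <+: ρ) : ¬ IsLeaf (graft ρ F S) τ := by
  rintro ⟨-, hleaf⟩
  obtain ⟨s, rfl⟩ := hτ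
  cases s with
  | nil =>
    obtain ⟨a, ha⟩ := hF
    exact hleaf a (subset_of_mem ha (by simpa using (hS a ha).2.1))
  | cons c s => exact hleaf c (Or.inl ⟨s, by simp⟩)

lemma bushyAbove (hg : (g ρ.length : ℕ∞) ≤ F.encard) : BushyAbove g ρ (graft ρ F S) := by
  refine ⟨isTree hS, Or.inl (List.prefix_refl ρ), ?_, ?_⟩
  · intro τ hτ
    rcases prefix_or_exists_append_prefix hS hτ with hτρ | ⟨a, -, -, hρτ⟩
    · exact Or.inl hτρ
    · exact Or.inr ((ρ.prefix_append [a]).trans hρτ)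
  · intro τ hτ hρτ hnotleaf
    rcases hρτ.length_le.eq_or_lt with hlen | hlen
    · obtain rfl := (hρτ.eq_of_length hlen).symm
      exact hg.trans <| Set.encard_mono fun a ha => subset_of_mem ha (hS a ha).2.1
    obtain ⟨a, ha, hτa, hρa⟩ := exists_append_prefix hS hτ hlen
    rw [children_eq hS ha hρa]
    exact (hS a ha).2.2.2 τ hτa hρa (mt (isLeaf_iff hS ha hτa hρa).2 hnotleaf)

end graft

lemma BigAbove.of_append {g : ℕ → ℕ} {ρ : List ℕ} {B : Set (List ℕ)} {F : Set ℕ}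
    (hF : F.Finite) (hFne : F.Nonempty) (hg : (g ρ.length : ℕ∞) ≤ F.encard)
    (hbig : ∀ a ∈ F, BigAbove g (ρ ++ [a]) B) : BigAbove g ρ B := by
  choose! S hfin hS hleaf using hbig
  refine ⟨graft ρ F S, graft.finite hF hfin, graft.bushyAbove hS hg, fun τ hτ => ?_⟩
  rcases graft.prefix_or_exists_append_prefix hS hτ.1 with hτρ | ⟨a, ha, hτa, hρτ⟩
  · exact absurd hτ (graft.not_isLeaf_of_prefix hS hFne hτρ)
  · exact hleaf a ha τ ((graft.isLeaf_iff hS ha hτa hρτ).1 hτ)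

lemma SmallAbove.encard_bigAbove_append_le {g : ℕ → ℕ} {ρ : List ℕ} {B : Set (List ℕ)}
    (hsmall : SmallAbove g ρ B) : {a | BigAbove g (ρ ++ [a]) B}.encard ≤ g ρ.length := by
  by_contra! hlt
  obtain ⟨F, hFbig, hFcard⟩ :=
    Set.exists_subset_encard_eq (k := ((g ρ.length + 1 : ℕ) : ℕ∞)) (by
      push_cast
      exact Order.add_one_le_of_lt hlt)
  refine hsmall (BigAbove.of_append (Set.finite_of_encard_eq_coe hFcard)
    (Set.nonempty_of_encard_ne_zero (by simp [hFcard])) ?_ hFbig)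
  rw [hFcard]
  exact_mod_cast Nat.le_succ _

theorem smallness_survives_one_step_general (g h : ℕ → ℕ)
    (T : Set (List ℕ)) (hT : BushyAbove h [] T) (B : Set (List ℕ)) (ρ : List ℕ)
    (hρ : ρ ∈ T) (hnotleaf : ¬ IsLeaf T ρ) (hsmall : SmallAbove g ρ B) :
    ((h ρ.length - g ρ.length : ℕ) : ℕ∞) ≤
      {a : ℕ | ρ ++ [a] ∈ T ∧ SmallAbove g (ρ ++ [a]) B}.encard := by
  have hsplit : {a | ρ ++ [a] ∈ T} ⊆
      {a : ℕ | ρ ++ [a] ∈ T ∧ SmallAbove g (ρ ++ [a]) B} ∪ {a | BigAbove g (ρ ++ [a]) B} :=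
    fun a ha => (em (BigAbove g (ρ ++ [a]) B)).symm.imp (⟨ha, ·⟩) id
  rw [ENat.natCast_sub, tsub_le_iff_right]
  calc (h ρ.length : ℕ∞)
      ≤ {a | ρ ++ [a] ∈ T}.encard := hT.2.2.2 ρ hρ List.nil_prefix hnotleaf
    _ ≤ {a : ℕ | ρ ++ [a] ∈ T ∧ SmallAbove g (ρ ++ [a]) B}.encard
          + {a | BigAbove g (ρ ++ [a]) B}.encard :=
        (Set.encard_mono hsplit).trans (Set.encard_union_le _ _)
    _ ≤ _ := add_le_add_right hsmall.encard_bigAbove_append_le _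

/-- Survival of smallness at one step: in an `h`-bushy tree above the empty string,
if `B` is `g`-small above a non-leaf `ρ ∈ T`, then `B` stays `g`-small above at least
`h |ρ| - g |ρ|` many immediate extensions of `ρ` lying in `T`. -/
theorem smallness_survives_one_step (g h : ℕ → ℕ) (hgh : ∀ n, g n ≤ h n)
    (T : Set (List ℕ)) (hT : BushyAbove h [] T) (B : Set (List ℕ)) (ρ : List ℕ)
    (hρ : ρ ∈ T) (hnotleaf : ¬ IsLeaf T ρ) (hsmall : SmallAbove g ρ B) :
    ((h ρ.length - g ρ.length : ℕ) : ℕ∞) ≤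
      {a : ℕ | ρ ++ [a] ∈ T ∧ SmallAbove g (ρ ++ [a]) B}.encard :=
  smallness_survives_one_step_general g h T hT B ρ hρ hnotleaf hsmall
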